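/- arXiv:2112.02165 — 3 statements merged into one kernel-verified Lean document; each statement's English description precedes it below -/
import Mathlib

section
/- Let u be a nonnegative monotone submodular function on subsets of a finite ground set with u(∅) ≥ 0, and suppose S and T are sets of the same cardinality k such that there is a bijection π : T \ S → S \ T (extended as the identity on T ∩ S) with the property that for every t ∈ T, u(S \ {π(t)} ∪ {t}) − u(S \ {π(t)}) ≤ u(S) − u(S \ {π(t)}) + ε (i.e., S is an ε-local optimum for these swaps). Then u(T) ≤ 2 u(S) + k ε. -/
/-- 1/2-approximation for ε-local optima of nonnegative monotone submodular functions: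
if `S` is an ε-local optimum with respect to the swaps given by an exchange bijection `π`,
then `u(T) ≤ 2 u(S) + k ε`. -/
theorem stmt_6 {α : Type*} [DecidableEq α] (u : Finset α → ℝ) (k : ℕ) (ε : ℝ)
    (hnonneg : ∀ A : Finset α, 0 ≤ u A)
    (hmono : ∀ A B : Finset α, A ⊆ B → u A ≤ u B)
    (hsub : ∀ A B : Finset α, u (A ∪ B) + u (A ∩ B) ≤ u A + u B)
    (S T : Finset α) (hSk : S.card = k) (hTk : T.card = k)
    (π : α → α)
    (hbij : Set.BijOn π ((T : Set α) \ (S : Set α)) ((S : Set α) \ (T : Set α)))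
    (hid : ∀ t ∈ T ∩ S, π t = t)
    (hswap : ∀ t ∈ T,
      u (insert t (S.erase (π t))) - u (S.erase (π t)) ≤ u S - u (S.erase (π t)) + ε) :
    u T ≤ 2 * u S + k * ε := by
  -- diminishing returns
  have dim : ∀ (A B : Finset α) (t : α), A ⊆ B →
      u (insert t B) - u B ≤ u (insert t A) - u A := by
    intro A B t hAB
    have h1 := hsub (insert t A) B
    have h2 : insert t A ∪ B = insert t B := by
      ext x
      simp only [Finset.mem_union, Finset.mem_insert]
      constructor
      · rintro (⟨rfl | hx⟩ | hx)
        · exact Or.inl rfl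
        · exact Or.inr (hAB hx)
        · exact Or.inr hx
      · rintro (rfl | hx)
        · exact Or.inl (Or.inl rfl)
        · exact Or.inr hx
    have h3 : A ⊆ insert t A ∩ B := fun x hx =>
      Finset.mem_inter.2 ⟨Finset.mem_insert_of_mem hx, hAB hx⟩
    have h4 := hmono _ _ h3
    rw [h2] at h1
    linarith
  -- erase version of diminishing returns
  have dime : ∀ (A B : Finset α) (s : α), A ⊆ B → s ∈ A →
      u B - u (B.erase s) ≤ u A - u (A.erase s) := by
    intro A B s hAB hs
    have := dim (A.erase s) (B.erase s) s (Finset.erase_subset_erase s hAB)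
    rwa [Finset.insert_erase hs, Finset.insert_erase (hAB hs)] at this
  -- telescoping
  have tele : ∀ (R : Finset α), u (S ∪ R) - u S ≤ ∑ t ∈ R, (u (insert t S) - u S) := by
    intro R
    induction R using Finset.induction_on with
    | empty => simp
    | @insert t R ht ih =>
      rw [Finset.sum_insert ht]
      have h1 : S ∪ insert t R = insert t (S ∪ R) := by
        ext x; simp [Finset.mem_union, Finset.mem_insert, or_left_comm]
      have h2 := dim S (S ∪ R) t Finset.subset_union_left
      rw [h1]
      linarith
  -- marginal sum bound: for I ⊆ S
  have marg : ∀ (I : Finset α), I ⊆ S →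
      ∑ s ∈ I, (u S - u (S.erase s)) ≤ u S - u (S \ I) := by
    intro I
    induction I using Finset.induction_on with
    | empty => simp
    | @insert s I hs ih =>
      intro hIS
      have hsS : s ∈ S := hIS (Finset.mem_insert_self s I)
      have hIS' : I ⊆ S := fun x hx => hIS (Finset.mem_insert_of_mem hx)
      rw [Finset.sum_insert hs]
      have hsub1 : S \ I ⊆ S := Finset.sdiff_subset
      have hsSI : s ∈ S \ I := Finset.mem_sdiff.2 ⟨hsS, hs⟩
      have h1 := dime (S \ I) S s hsub1 hsSI
      have h2 : (S \ I).erase s = S \ insert s I := by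
        ext x; simp [Finset.mem_erase, Finset.mem_sdiff, Finset.mem_insert]; tauto
      have h3 := ih hIS'
      rw [h2] at h1
      linarith
  -- π is injective on T
  have hinj : Set.InjOn π (T : Set α) := by
    intro a ha b hb hab
    by_cases haS : a ∈ S <;> by_cases hbS : b ∈ S
    · have h1 := hid a (Finset.mem_inter.2 ⟨ha, haS⟩)
      have h2 := hid b (Finset.mem_inter.2 ⟨hb, hbS⟩)
      rw [h1, h2] at hab; exact hab
    · have h1 := hid a (Finset.mem_inter.2 ⟨ha, haS⟩)
      have h2 := hbij.mapsTo ⟨hb, hbS⟩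
      rw [h1] at hab
      exact absurd (hab ▸ ha) (by exact_mod_cast h2.2)
    · have h1 := hid b (Finset.mem_inter.2 ⟨hb, hbS⟩)
      have h2 := hbij.mapsTo ⟨ha, haS⟩
      rw [h1] at hab
      exact absurd (hab ▸ hb) (by exact_mod_cast h2.2)
    · exact hbij.injOn ⟨ha, haS⟩ ⟨hb, hbS⟩ hab
  -- image of T under π is in S
  have himg : T.image π ⊆ S := by
    intro x hx
    obtain ⟨t, ht, rfl⟩ := Finset.mem_image.1 hx
    by_cases htS : t ∈ S
    · rw [hid t (Finset.mem_inter.2 ⟨ht, htS⟩)]; exact htS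
    · exact_mod_cast (hbij.mapsTo ⟨ht, htS⟩).1
  -- main chain
  have step1 : u T ≤ u (S ∪ T) := hmono _ _ Finset.subset_union_right
  have step2 := tele T
  have step3 : ∑ t ∈ T, (u (insert t S) - u S) ≤
      ∑ t ∈ T, (u S - u (S.erase (π t)) + ε) := by
    apply Finset.sum_le_sum
    intro t ht
    have h1 : S.erase (π t) ⊆ S := Finset.erase_subset _ _
    have h2 := dim (S.erase (π t)) S t h1
    have h3 := hswap t ht
    linarith
  have step4 : ∑ t ∈ T, (u S - u (S.erase (π t)) + ε) =
      (∑ s ∈ T.image π, (u S - u (S.erase s))) + k * ε := by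
    rw [Finset.sum_add_distrib, Finset.sum_const, hTk,
      Finset.sum_image (fun a ha b hb h => hinj (by exact_mod_cast ha) (by exact_mod_cast hb) h)]
    simp [nsmul_eq_mul]
  have step5 := marg (T.image π) himg
  have step6 := hnonneg (S \ T.image π)
  rw [step4] at step3
  linarith
end

section
/- Let u_1, …, u_n be nonnegative monotone submodular functions on subsets of a finite ground set, and let S_1, …, S_n and T_1, …, T_n be sets with |S_j| = |T_j| = k such that for each j there is a bijection π_j between T_j \ S_j and S_j \ T_j (extended as identity on T_j ∩ S_j) with each single swap S_j \ {π_j(t)} ∪ {t} lying in an allowed family, and suppose ∑_{j=1}^n max over allowed single-element swaps T of u_j(T) ≤ ∑_{j=1}^n u_j(S_j) + n ε. Then ∑_{j=1}^n u_j(T_j) ≤ 2 ∑_{j=1}^n u_j(S_j) + n k ε. -/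
private lemma sumA {α : Type*} [DecidableEq α] (u : Finset α → ℝ)
    (hsub : ∀ A B, u (A ∪ B) + u (A ∩ B) ≤ u A + u B)
    (A B : Finset α) :
    u (A ∪ B) ≤ u A + ∑ t ∈ B \ A, (u (insert t A) - u A) := by
  induction B using Finset.induction_on with
  | empty => simp
  | @insert b B' hb ih =>
    by_cases hbA : b ∈ A
    · have e1 : A ∪ insert b B' = A ∪ B' := by ext x; simp; aesop
      have e2 : insert b B' \ A = B' \ A := Finset.insert_sdiff_of_mem _ hbA
      simpa only [e1, e2] using ih
    · have hbAB : b ∉ A ∪ B' := by simp [hbA, hb]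
      have h1 : insert b A ∪ (A ∪ B') = A ∪ insert b B' := by
        ext x; simp
      have h2 : insert b A ∩ (A ∪ B') = A := by
        ext x; simp; aesop
      have hs := hsub (insert b A) (A ∪ B')
      rw [h1, h2] at hs
      rw [Finset.insert_sdiff_of_notMem _ hbA,
        Finset.sum_insert (by simp [hbA, hb])]
      linarith

private lemma sumB {α : Type*} [DecidableEq α] (u : Finset α → ℝ)
    (hsub : ∀ A B, u (A ∪ B) + u (A ∩ B) ≤ u A + u B)
    (S D : Finset α) :
    ∑ s ∈ D, (u S - u (S.erase s)) ≤ u S - u (S \ D) := by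
  induction D using Finset.induction_on with
  | empty => simp
  | @insert d D' hd ih =>
    have h1 : S.erase d ∪ (S \ D') = S := by
      ext x; simp [Finset.mem_erase]
      constructor
      · tauto
      · intro hx
        by_cases hxd : x = d
        · exact Or.inr ⟨hx, hxd ▸ hd⟩
        · exact Or.inl ⟨hxd, hx⟩
    have h2 : S.erase d ∩ (S \ D') = S \ insert d D' := by
      ext x; simp [Finset.mem_erase]; tauto
    have hs := hsub (S.erase d) (S \ D')
    rw [h1, h2] at hs
    rw [Finset.sum_insert hd]
    linarith

/-- Averaged 1/2-approximation guarantee for joint local ε-optima (Lemma 1):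
if `∑_j max_{T ∈ I_j(S_j)} u_j(T) ≤ ∑_j u_j(S_j) + nε` and exchange bijections exist whose
single-element swaps are allowed, then `∑_j u_j(T_j) ≤ 2 ∑_j u_j(S_j) + n k ε`. -/
theorem stmt_7 {α : Type*} [DecidableEq α] (n k : ℕ) (ε : ℝ)
    (u : Fin n → Finset α → ℝ)
    (hnonneg : ∀ j (A : Finset α), 0 ≤ u j A)
    (hmono : ∀ j (A B : Finset α), A ⊆ B → u j A ≤ u j B)
    (hsub : ∀ j (A B : Finset α), u j (A ∪ B) + u j (A ∩ B) ≤ u j A + u j B)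
    (S T : Fin n → Finset α)
    (hSk : ∀ j, (S j).card = k) (hTk : ∀ j, (T j).card = k)
    (π : Fin n → α → α)
    (hbij : ∀ j, Set.BijOn (π j) ((T j : Set α) \ (S j : Set α)) ((S j : Set α) \ (T j : Set α)))
    (hid : ∀ j, ∀ t ∈ T j ∩ S j, π j t = t)
    (ℐ : Fin n → Set (Finset α))
    (hself : ∀ j, S j ∈ ℐ j)
    (hallowed : ∀ j, ∀ t ∈ T j, insert t ((S j).erase (π j t)) ∈ ℐ j)
    (M : Fin n → ℝ)
    (hMmax : ∀ j, ∀ A ∈ ℐ j, u j A ≤ M j)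
    (hlocal : ∑ j, M j ≤ ∑ j, u j (S j) + n * ε) :
    ∑ j, u j (T j) ≤ 2 * ∑ j, u j (S j) + n * k * ε := by
  have hkey : ∀ j, u j (T j) ≤ 2 * u j (S j) + k * (M j - u j (S j)) := by
    intro j
    have hMS : u j (S j) ≤ M j := hMmax j _ (hself j)
    have h1 : u j (T j) ≤ u j (S j ∪ T j) := hmono j _ _ Finset.subset_union_right
    have h2 := sumA (u j) (hsub j) (S j) (T j)
    -- pointwise bound on marginals
    have h3 : ∀ t ∈ T j \ S j,
        u j (insert t (S j)) - u j (S j)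
          ≤ (M j - u j (S j)) + (u j (S j) - u j ((S j).erase (π j t))) := by
      intro t ht
      rw [Finset.mem_sdiff] at ht
      obtain ⟨htT, htS⟩ := ht
      have hπ : π j t ∈ (S j : Set α) \ (T j : Set α) :=
        (hbij j).mapsTo (by simp [htT, htS])
      obtain ⟨hπS, hπT⟩ := hπ
      simp only [Finset.mem_coe] at hπS hπT
      have hU : insert t ((S j).erase (π j t)) ∪ S j = insert t (S j) := by
        ext x; simp [Finset.mem_erase]
        constructor
        · rintro ((h | ⟨_, h⟩) | h) <;> tauto
        · rintro (h | h)
          · tauto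
          · by_cases hx : x = π j t
            · subst hx; tauto
            · tauto
      have hI : insert t ((S j).erase (π j t)) ∩ S j = (S j).erase (π j t) := by
        ext x; simp [Finset.mem_erase]
        aesop
      have hs := hsub j (insert t ((S j).erase (π j t))) (S j)
      rw [hU, hI] at hs
      have hA : u j (insert t ((S j).erase (π j t))) ≤ M j :=
        hMmax j _ (hallowed j t htT)
      linarith
    have h4 : ∑ t ∈ T j \ S j, (u j (insert t (S j)) - u j (S j))
        ≤ ∑ t ∈ T j \ S j, ((M j - u j (S j)) + (u j (S j) - u j ((S j).erase (π j t)))) :=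
      Finset.sum_le_sum h3
    rw [Finset.sum_add_distrib, Finset.sum_const, nsmul_eq_mul] at h4
    -- reindex the second sum
    have h5 : ∑ t ∈ T j \ S j, (u j (S j) - u j ((S j).erase (π j t)))
        = ∑ a ∈ S j \ T j, (u j (S j) - u j ((S j).erase a)) := by
      apply Finset.sum_bij (fun t _ => π j t)
      · intro t ht
        rw [Finset.mem_sdiff] at ht ⊢
        have := (hbij j).mapsTo (show t ∈ (T j : Set α) \ (S j : Set α) by
          simp [ht.1, ht.2])
        simpa using this
      · intro a ha b hb hab
        rw [Finset.mem_sdiff] at ha hb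
        exact (hbij j).injOn (by simp [ha.1, ha.2]) (by simp [hb.1, hb.2]) hab
      · intro a ha
        rw [Finset.mem_sdiff] at ha
        obtain ⟨t, ht, hπt⟩ := (hbij j).surjOn (show a ∈ (S j : Set α) \ (T j : Set α) by
          simp [ha.1, ha.2])
        simp only [Set.mem_diff, Finset.mem_coe] at ht
        exact ⟨t, Finset.mem_sdiff.2 ⟨ht.1, ht.2⟩, hπt⟩
      · intros; rfl
    have h6 : ∑ a ∈ S j \ T j, (u j (S j) - u j ((S j).erase a)) ≤ u j (S j) := by
      have := sumB (u j) (hsub j) (S j) (S j \ T j)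
      have hpos : 0 ≤ u j (S j \ (S j \ T j)) := hnonneg j _
      linarith
    have hcard : ((T j \ S j).card : ℝ) ≤ (k : ℝ) := by
      have : (T j \ S j).card ≤ (T j).card := Finset.card_le_card Finset.sdiff_subset
      rw [hTk j] at this
      exact_mod_cast this
    have h7 : ((T j \ S j).card : ℝ) * (M j - u j (S j)) ≤ (k : ℝ) * (M j - u j (S j)) :=
      mul_le_mul_of_nonneg_right hcard (by linarith)
    rw [h5] at h4
    linarith
  have hsum : ∑ j, u j (T j) ≤ ∑ j, (2 * u j (S j) + (k : ℝ) * (M j - u j (S j))) :=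
    Finset.sum_le_sum (fun j _ => hkey j)
  rw [Finset.sum_add_distrib, ← Finset.mul_sum, ← Finset.mul_sum, Finset.sum_sub_distrib] at hsum
  have hk : (k : ℝ) * (∑ j, M j - ∑ j, u j (S j)) ≤ (k : ℝ) * ((n : ℝ) * ε) :=
    mul_le_mul_of_nonneg_left (by linarith) (by positivity)
  calc ∑ j, u j (T j) ≤ _ := hsum
    _ ≤ 2 * ∑ j, u j (S j) + n * k * ε := by
        rw [show (n : ℝ) * k * ε = k * (n * ε) by ring]; linarith
end

section
/- Let u : Finset α → ℝ be a monotone submodular function, S a finite set with |S| = k, and ε ≥ 0. Suppose T is another set of size k together with a bijection π : T → S (identity on T ∩ S) such that for every t ∈ T \ S, u(S \ {π(t)} ∪ {t}) ≤ u(S) + ε. Then u(S ∪ T) ≤ 2 u(S) + k ε − u(∅). -/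
private lemma margA {α : Type*} [DecidableEq α] (u : Finset α → ℝ)
    (hmono : ∀ A B : Finset α, A ⊆ B → u A ≤ u B)
    (hsub : ∀ A B : Finset α, u (A ∪ B) + u (A ∩ B) ≤ u A + u B)
    (S : Finset α) :
    ∀ B : Finset α, u (S ∪ B) ≤ u S + ∑ t ∈ B, (u (insert t S) - u S) := by
  intro B
  induction B using Finset.induction_on with
  | empty => simp
  | @insert a B ha ih =>
    rw [Finset.sum_insert ha]
    have key : u (S ∪ insert a B) + u ((S ∪ B) ∩ insert a S) ≤ u (S ∪ B) + u (insert a S) := by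
      have := hsub (S ∪ B) (insert a S)
      have he : (S ∪ B) ∪ insert a S = S ∪ insert a B := by
        ext x; simp only [Finset.mem_union, Finset.mem_insert]; tauto
      rwa [he] at this
    have hS : u S ≤ u ((S ∪ B) ∩ insert a S) := by
      apply hmono
      intro x hx
      simp [Finset.mem_inter, Finset.mem_union, Finset.mem_insert, hx]
    linarith

private lemma tele {α : Type*} [DecidableEq α] (u : Finset α → ℝ)
    (hsub : ∀ A B : Finset α, u (A ∪ B) + u (A ∩ B) ≤ u A + u B)
    (S : Finset α) :
    ∀ A : Finset α, A ⊆ S → ∑ s ∈ A, (u S - u (S.erase s)) ≤ u S - u (S \ A) := by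
  intro A
  induction A using Finset.induction_on with
  | empty => intro _; simp
  | @insert a A ha ih =>
    intro hsub'
    have haS : a ∈ S := hsub' (Finset.mem_insert_self a A)
    have hAS : A ⊆ S := fun x hx => hsub' (Finset.mem_insert_of_mem hx)
    rw [Finset.sum_insert ha]
    have key : u S + u (S \ insert a A) ≤ u (S.erase a) + u (S \ A) := by
      have := hsub (S.erase a) (S \ A)
      have hu : (S.erase a) ∪ (S \ A) = S := by
        ext x
        simp only [Finset.mem_union, Finset.mem_erase, Finset.mem_sdiff]
        constructor
        · rintro (⟨_, h⟩ | ⟨h, _⟩) <;> exact h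
        · intro hx
          by_cases hxa : x = a
          · right; exact ⟨hx, by simp [hxa]; exact fun h => ha (hxa ▸ h)⟩
          · left; exact ⟨hxa, hx⟩
      have hi : (S.erase a) ∩ (S \ A) = S \ insert a A := by
        ext x
        simp only [Finset.mem_inter, Finset.mem_erase, Finset.mem_sdiff, Finset.mem_insert]
        tauto
      rw [hu, hi] at this
      exact this
    have := ih hAS
    linarith

/-- If `S` is an ε-local optimum for the swaps given by an exchange bijection `π : T → S`
(identity on `T ∩ S`), then `u(S ∪ T) ≤ 2 u(S) + k ε − u(∅)` for monotone submodular `u`. -/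
theorem stmt_19 {α : Type*} [DecidableEq α] (u : Finset α → ℝ) (k : ℕ) (ε : ℝ) (hε : 0 ≤ ε)
    (hmono : ∀ A B : Finset α, A ⊆ B → u A ≤ u B)
    (hsub : ∀ A B : Finset α, u (A ∪ B) + u (A ∩ B) ≤ u A + u B)
    (S T : Finset α) (hSk : S.card = k) (hTk : T.card = k)
    (π : α → α) (hbij : Set.BijOn π (T : Set α) (S : Set α))
    (hid : ∀ t ∈ T ∩ S, π t = t)
    (hswap : ∀ t ∈ T \ S, u (insert t (S.erase (π t))) ≤ u S + ε) :
    u (S ∪ T) ≤ 2 * u S + k * ε - u ∅ := by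
  classical
  have hUnion : S ∪ T = S ∪ (T \ S) := by
    ext x; simp only [Finset.mem_union, Finset.mem_sdiff]; tauto
  have hπS : ∀ t ∈ T \ S, π t ∈ S := by
    intro t ht
    have := hbij.mapsTo (by simpa using (Finset.mem_sdiff.mp ht).1)
    simpa using this
  have hinj : ∀ t₁ ∈ T \ S, ∀ t₂ ∈ T \ S, π t₁ = π t₂ → t₁ = t₂ := by
    intro t₁ h₁ t₂ h₂ h
    exact hbij.injOn (by simpa using (Finset.mem_sdiff.mp h₁).1)
      (by simpa using (Finset.mem_sdiff.mp h₂).1) h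
  have step1 : u (S ∪ T) ≤ u S + ∑ t ∈ T \ S, (u (insert t S) - u S) := by
    rw [hUnion]; exact margA u hmono hsub S (T \ S)
  have step2 : ∀ t ∈ T \ S,
      u (insert t S) - u S ≤ u (insert t (S.erase (π t))) - u (S.erase (π t)) := by
    intro t ht
    have htS : t ∉ S := (Finset.mem_sdiff.mp ht).2
    have hπ : π t ∈ S := hπS t ht
    have key := hsub (insert t (S.erase (π t))) S
    have hu : insert t (S.erase (π t)) ∪ S = insert t S := by
      rw [Finset.insert_union, Finset.union_eq_right.mpr (Finset.erase_subset _ _)]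
    have hi : insert t (S.erase (π t)) ∩ S = S.erase (π t) := by
      rw [Finset.insert_inter_of_notMem htS,
        Finset.inter_eq_left.mpr (Finset.erase_subset _ _)]
    rw [hu, hi] at key
    linarith
  have step3 : ∀ t ∈ T \ S,
      u (insert t (S.erase (π t))) - u (S.erase (π t)) ≤ u S + ε - u (S.erase (π t)) := by
    intro t ht
    have := hswap t ht
    linarith
  have sum_le : ∑ t ∈ T \ S, (u (insert t S) - u S)
      ≤ ∑ t ∈ T \ S, (u S + ε - u (S.erase (π t))) :=
    Finset.sum_le_sum fun t ht => le_trans (step2 t ht) (step3 t ht)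
  set A : Finset α := (T \ S).image π with hA
  have hAsub : A ⊆ S := by
    intro s hs
    rcases Finset.mem_image.mp hs with ⟨t, ht, rfl⟩
    exact hπS t ht
  have hsum_image : ∑ t ∈ T \ S, (u S - u (S.erase (π t)))
      = ∑ s ∈ A, (u S - u (S.erase s)) := by
    rw [hA, Finset.sum_image]
    intro t₁ h₁ t₂ h₂ h
    exact hinj t₁ h₁ t₂ h₂ h
  have htel : ∑ s ∈ A, (u S - u (S.erase s)) ≤ u S - u (S \ A) :=
    tele u hsub S A hAsub
  have hempty : u ∅ ≤ u (S \ A) := hmono _ _ (Finset.empty_subset _)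
  have hcard : (T \ S).card ≤ k := by
    calc (T \ S).card ≤ T.card := Finset.card_le_card (Finset.sdiff_subset)
    _ = k := hTk
  have hsum_split : ∑ t ∈ T \ S, (u S + ε - u (S.erase (π t)))
      = (T \ S).card * ε + ∑ t ∈ T \ S, (u S - u (S.erase (π t))) := by
    have h1 : ∀ t ∈ T \ S, u S + ε - u (S.erase (π t))
        = ε + (u S - u (S.erase (π t))) := fun t _ => by ring
    rw [Finset.sum_congr rfl h1, Finset.sum_add_distrib, Finset.sum_const, nsmul_eq_mul]
  have hεterm : ((T \ S).card : ℝ) * ε ≤ (k : ℝ) * ε := by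
    apply mul_le_mul_of_nonneg_right _ hε
    exact_mod_cast hcard
  calc u (S ∪ T) ≤ u S + ∑ t ∈ T \ S, (u (insert t S) - u S) := step1
    _ ≤ u S + ∑ t ∈ T \ S, (u S + ε - u (S.erase (π t))) := by linarith
    _ = u S + ((T \ S).card * ε + ∑ s ∈ A, (u S - u (S.erase s))) := by
        rw [hsum_split, hsum_image]
    _ ≤ u S + (k * ε + (u S - u (S \ A))) := by linarith
    _ ≤ 2 * u S + k * ε - u ∅ := by linarith
end
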